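/- arXiv:2509.10023 — 5 statements merged into one kernel-verified Lean document; each statement's English description precedes it below -/
import Mathlib

section
/- Let J be a positive integer, let u_1, …, u_J be nonzero integers, and let δ > 0 be a real number. Let s_j, t_j, q_j (1 ≤ j ≤ J) be complex numbers with |s_j| < 1, |t_j| < 1, and |q_j| < 1. Then |∏_{j=1}^J (s_j, t_j; q_j)^{u_j δ} − 1| ≤ ∏_{j=1}^J (|s_j|, |t_j|; |q_j|)^{−|u_j| δ} − 1. -/
open scoped BigOperators

noncomputable def pochC (s t q : ℂ) (c : ℝ) : ℂ :=
  ∏' i : ℕ, ((1 - s * q ^ i) ^ (c : ℂ)) * ((1 - t * q ^ i) ^ (c : ℂ))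

noncomputable def pochR (s t q : ℝ) (c : ℝ) : ℝ :=
  ∏' i : ℕ, ((1 - s * q ^ i) * (1 - t * q ^ i)) ^ c

/-!
Writing each factor as `(s, t; q)^c = exp (c · ∑ᵢ (log (1 - s qⁱ) + log (1 - t qⁱ)))`, the
whole product is `exp W` for an explicit `W`. The Taylor series `-log (1 - x) = ∑ xⁿ / n` has
nonnegative coefficients, so `‖log (1 - x)‖ ≤ -log (1 - ‖x‖)`, which gives `‖W‖ ≤ L` where
`exp L` is the right-hand product. Finally `‖exp W - 1‖ ≤ exp ‖W‖ - 1`, again because the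
exponential series has nonnegative coefficients.
-/

lemma Complex.norm_exp_sub_one_le_exp_norm_sub_one (z : ℂ) :
    ‖Complex.exp z - 1‖ ≤ Real.exp ‖z‖ - 1 := by
  simpa using Complex.norm_exp_sub_sum_le_exp_norm_sub_sum z 1

lemma Complex.norm_log_one_sub_le {x : ℂ} (hx : ‖x‖ < 1) :
    ‖Complex.log (1 - x)‖ ≤ -Real.log (1 - ‖x‖) := by
  rw [← norm_neg]
  refine (Complex.hasSum_taylorSeries_neg_log' hx).norm_le_of_bounded
    (Real.hasSum_pow_div_log_of_abs_lt_one (by rwa [abs_norm])) fun n => ?_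
  rw [norm_div, norm_pow]
  norm_cast

lemma Complex.norm_tsum_log_one_sub_le {ι : Type*} {f : ι → ℂ} (hf1 : ∀ i, ‖f i‖ < 1)
    (hf : Summable fun i => ‖f i‖) :
    ‖∑' i, Complex.log (1 - f i)‖ ≤ -∑' i, Real.log (1 - ‖f i‖) := by
  have hlog : Summable fun i => Real.log (1 - ‖f i‖) := by
    simpa only [sub_eq_add_neg] using Real.summable_log_one_add_of_summable hf.neg
  rw [← tsum_neg]
  exact tsum_of_norm_bounded hlog.neg.hasSum fun i => Complex.norm_log_one_sub_le (hf1 i)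

lemma norm_mul_pow_lt_one {𝕜 : Type*} [NormedDivisionRing 𝕜] {a q : 𝕜} (ha : ‖a‖ < 1)
    (hq : ‖q‖ ≤ 1) (i : ℕ) : ‖a * q ^ i‖ < 1 := by
  rw [norm_mul, norm_pow]
  exact mul_lt_one_of_nonneg_of_lt_one_left (norm_nonneg a) ha (pow_le_one₀ (norm_nonneg q) hq)

/-- A logarithm of `(a; q)_∞ = ∏ᵢ (1 - a qⁱ)`. -/
noncomputable def logQPochC (a q : ℂ) : ℂ :=
  ∑' i : ℕ, Complex.log (1 - a * q ^ i)

noncomputable def logQPochR (a q : ℝ) : ℝ :=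
  ∑' i : ℕ, Real.log (1 - a * q ^ i)

lemma Complex.summable_log_one_sub_mul_pow {a q : ℂ} (hq : ‖q‖ < 1) :
    Summable fun i : ℕ => Complex.log (1 - a * q ^ i) := by
  simpa only [sub_eq_add_neg] using Complex.summable_log_one_add_of_summable
    ((summable_geometric_of_norm_lt_one hq).mul_left a).neg

lemma Real.summable_log_one_sub_mul_pow {a q : ℝ} (hq0 : 0 ≤ q) (hq : q < 1) :
    Summable fun i : ℕ => Real.log (1 - a * q ^ i) := by
  simpa only [sub_eq_add_neg] using Real.summable_log_one_add_of_summable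
    ((summable_geometric_of_lt_one hq0 hq).mul_left a).neg

lemma norm_logQPochC_le {a q : ℂ} (ha : ‖a‖ < 1) (hq : ‖q‖ < 1) :
    ‖logQPochC a q‖ ≤ -logQPochR ‖a‖ ‖q‖ := by
  have hgeom : Summable fun i : ℕ => ‖a * q ^ i‖ := by
    simpa only [norm_mul, norm_pow] using
      (summable_geometric_of_lt_one (norm_nonneg q) hq).mul_left ‖a‖
  simpa only [logQPochC, logQPochR, norm_mul, norm_pow] using
    Complex.norm_tsum_log_one_sub_le (norm_mul_pow_lt_one ha hq.le) hgeom

lemma pochC_eq_cexp {s t q : ℂ} (c : ℝ) (hs : ‖s‖ < 1) (ht : ‖t‖ < 1) (hq : ‖q‖ < 1) :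
    pochC s t q c = Complex.exp (c * (logQPochC s q + logQPochC t q)) := by
  have hsum := ((Complex.summable_log_one_sub_mul_pow (a := s) hq).hasSum.add
    (Complex.summable_log_one_sub_mul_pow (a := t) hq).hasSum).mul_left (c : ℂ)
  have hne : ∀ {a : ℂ}, ‖a‖ < 1 → ∀ i : ℕ, 1 - a * q ^ i ≠ 0 := fun ha i h => by
    have := norm_mul_pow_lt_one ha hq.le i
    rw [← sub_eq_zero.mp h, norm_one] at this
    exact this.false
  rw [pochC, logQPochC, logQPochC, ← hsum.cexp.tprod_eq]
  refine tprod_congr fun i => ?_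
  rw [Complex.cpow_def_of_ne_zero (hne hs i), Complex.cpow_def_of_ne_zero (hne ht i),
    ← Complex.exp_add, Function.comp_apply]
  congr 1
  ring

lemma pochR_eq_rexp {a b r : ℝ} (c : ℝ) (ha0 : 0 ≤ a) (ha : a < 1) (hb0 : 0 ≤ b) (hb : b < 1)
    (hr0 : 0 ≤ r) (hr : r < 1) :
    pochR a b r c = Real.exp (c * (logQPochR a r + logQPochR b r)) := by
  have hsum := ((Real.summable_log_one_sub_mul_pow (a := a) hr0 hr).hasSum.add
    (Real.summable_log_one_sub_mul_pow (a := b) hr0 hr).hasSum).mul_left c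
  have hpos : ∀ {x : ℝ}, 0 ≤ x → x < 1 → ∀ i : ℕ, 0 < 1 - x * r ^ i := fun hx0 hx i => by
    linarith [mul_le_of_le_one_right hx0 (pow_le_one₀ (n := i) hr0 hr.le)]
  rw [pochR, logQPochR, logQPochR, ← hsum.rexp.tprod_eq]
  refine tprod_congr fun i => ?_
  rw [Real.rpow_def_of_pos (mul_pos (hpos ha0 ha i) (hpos hb0 hb i)),
    Real.log_mul (hpos ha0 ha i).ne' (hpos hb0 hb i).ne', Function.comp_apply, mul_comm]

lemma norm_mul_logQPochC_add_le {s t q : ℂ} (c : ℝ) (hs : ‖s‖ < 1) (ht : ‖t‖ < 1)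
    (hq : ‖q‖ < 1) :
    ‖(c : ℂ) * (logQPochC s q + logQPochC t q)‖ ≤
      -|c| * (logQPochR ‖s‖ ‖q‖ + logQPochR ‖t‖ ‖q‖) := by
  rw [norm_mul, Complex.norm_real, Real.norm_eq_abs, neg_mul, ← mul_neg, neg_add]
  gcongr
  exact (norm_add_le _ _).trans (add_le_add (norm_logQPochC_le hs hq) (norm_logQPochC_le ht hq))

theorem stmt15_general (J : ℕ) (u : Fin J → ℤ)
    (δ : ℝ) (hδ : 0 < δ) (s t q : Fin J → ℂ)
    (hs : ∀ j, ‖s j‖ < 1) (ht : ∀ j, ‖t j‖ < 1)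
    (hq : ∀ j, ‖q j‖ < 1) :
    ‖(∏ j, pochC (s j) (t j) (q j) ((u j : ℝ) * δ)) - 1‖ ≤
      (∏ j, pochR (‖s j‖) (‖t j‖) (‖q j‖)
        (-(|(u j : ℝ)| * δ))) - 1 := by
  set c : Fin J → ℝ := fun j => (u j : ℝ) * δ
  have habs : ∀ j, |c j| = |(u j : ℝ)| * δ := fun j => by rw [abs_mul, abs_of_pos hδ]
  have hC : ∏ j, pochC (s j) (t j) (q j) (c j) =
      Complex.exp (∑ j, (c j : ℂ) * (logQPochC (s j) (q j) + logQPochC (t j) (q j))) := by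
    rw [Complex.exp_sum]
    exact Finset.prod_congr rfl fun j _ => pochC_eq_cexp (c j) (hs j) (ht j) (hq j)
  have hR : ∏ j, pochR ‖s j‖ ‖t j‖ ‖q j‖ (-(|(u j : ℝ)| * δ)) =
      Real.exp (∑ j, -|c j| * (logQPochR ‖s j‖ ‖q j‖ + logQPochR ‖t j‖ ‖q j‖)) := by
    rw [Real.exp_sum]
    refine Finset.prod_congr rfl fun j _ => ?_
    rw [habs]
    exact pochR_eq_rexp _ (norm_nonneg _) (hs j) (norm_nonneg _) (ht j) (norm_nonneg _) (hq j)
  rw [hC, hR]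
  refine (Complex.norm_exp_sub_one_le_exp_norm_sub_one _).trans ?_
  gcongr
  exact (norm_sum_le _ _).trans
    (Finset.sum_le_sum fun j _ => norm_mul_logQPochC_add_le (c j) (hs j) (ht j) (hq j))

theorem stmt15 (J : ℕ) (hJ : 0 < J) (u : Fin J → ℤ) (hu : ∀ j, u j ≠ 0)
    (δ : ℝ) (hδ : 0 < δ) (s t q : Fin J → ℂ)
    (hs : ∀ j, ‖s j‖ < 1) (ht : ∀ j, ‖t j‖ < 1)
    (hq : ∀ j, ‖q j‖ < 1) :
    ‖(∏ j, pochC (s j) (t j) (q j) ((u j : ℝ) * δ)) - 1‖ ≤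
      (∏ j, pochR (‖s j‖) (‖t j‖) (‖q j‖)
        (-(|(u j : ℝ)| * δ))) - 1 :=
  stmt15_general J u δ hδ s t q hs ht hq
end

section
/- For every real number x > 0 and every integer y > 3, ∑_{k=3}^{y} I₋₁(2x/k) ≤ x·log y + 3·I₋₁(2x/3) − (5/2 − γ − 1/(2y))·x, where γ is the Euler–Mascheroni constant. -/
/-!
Write `I₋₁(z) = z / 2 + R(z)`. Every term of `R` has degree at least `3`, so
`R(c w) ≤ c³ R(w)` for `0 ≤ c ≤ 1` and `w ≥ 0`; with `c = 3 / k` and `w = 2x / 3` each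
summand is at most `x / k + 27 k⁻³ (I₋₁(2x/3) - x/3)`. Summing over `3 ≤ k ≤ y` uses
`∑ 1/k = H_y - 3/2 ≤ log y + γ + 1/(2y) - 3/2`, because `H_n - log n - 1/(2n)` increases
to `γ` (from `log u ≤ sinh (log u)`), and `∑ 27/k³ ≤ 3`.
-/

open scoped BigOperators

noncomputable def besselI1 (z : ℝ) : ℝ :=
  ∑' n : ℕ, (1 / ((Nat.factorial n : ℝ) * (Nat.factorial (n + 1) : ℝ))) * (z / 2) ^ (2 * n + 1)

open Real Filter Topology Finset

noncomputable def besselI1Term (n : ℕ) (z : ℝ) : ℝ :=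
  1 / ((Nat.factorial n : ℝ) * (Nat.factorial (n + 1) : ℝ)) * (z / 2) ^ (2 * n + 1)

lemma besselI1Term_nonneg (n : ℕ) {z : ℝ} (hz : 0 ≤ z) : 0 ≤ besselI1Term n z := by
  unfold besselI1Term; positivity

lemma besselI1Term_mul (n : ℕ) (c z : ℝ) :
    besselI1Term n (c * z) = c ^ (2 * n + 1) * besselI1Term n z := by
  unfold besselI1Term; ring

lemma summable_besselI1Term (z : ℝ) : Summable (besselI1Term · z) := by
  refine .of_norm_bounded ((summable_pow_div_factorial ((z / 2) ^ 2)).mul_left |z / 2|)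
    fun n ↦ ?_
  have hfac : (1 : ℝ) ≤ (n + 1).factorial := mod_cast Nat.one_le_iff_ne_zero.2 (by positivity)
  have hn : (0 : ℝ) < n.factorial := by positivity
  rw [besselI1Term, Real.norm_eq_abs, abs_mul, abs_pow, abs_of_pos (by positivity),
    ← sq_abs (z / 2), ← pow_mul, pow_succ]
  calc 1 / (n.factorial * (n + 1).factorial) * (|z / 2| ^ (2 * n) * |z / 2|)
      ≤ 1 / n.factorial * (|z / 2| ^ (2 * n) * |z / 2|) := by
        gcongr; exact le_mul_of_one_le_right hn.le hfac
    _ = |z / 2| * (|z / 2| ^ (2 * n) / n.factorial) := by ring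

lemma besselI1_eq_half_add_tsum (z : ℝ) :
    besselI1 z = z / 2 + ∑' n, besselI1Term (n + 1) z := by
  rw [show besselI1 z = ∑' n, besselI1Term n z from rfl,
    (summable_besselI1Term z).tsum_eq_zero_add]
  simp [besselI1Term]

lemma half_le_besselI1 {z : ℝ} (hz : 0 ≤ z) : z / 2 ≤ besselI1 z := by
  rw [besselI1_eq_half_add_tsum]
  exact le_add_of_nonneg_right (tsum_nonneg fun n ↦ besselI1Term_nonneg _ hz)

lemma besselI1_mul_sub_half_le {c w : ℝ} (hc₀ : 0 ≤ c) (hc₁ : c ≤ 1) (hw : 0 ≤ w) :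
    besselI1 (c * w) - c * w / 2 ≤ c ^ 3 * (besselI1 w - w / 2) := by
  have hsum (z : ℝ) : Summable fun n ↦ besselI1Term (n + 1) z :=
    (summable_nat_add_iff 1).2 (summable_besselI1Term z)
  rw [besselI1_eq_half_add_tsum, besselI1_eq_half_add_tsum, add_sub_cancel_left,
    add_sub_cancel_left, ← tsum_mul_left]
  refine Summable.tsum_le_tsum (fun n ↦ ?_) (hsum _) ((hsum w).mul_left _)
  rw [besselI1Term_mul]
  exact mul_le_mul_of_nonneg_right (pow_le_pow_of_le_one hc₀ hc₁ (by omega))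
    (besselI1Term_nonneg _ hw)

lemma besselI1_div_le {x a b : ℝ} (hx : 0 ≤ x) (ha : 0 < a) (hab : a ≤ b) :
    besselI1 (x / b) ≤ x / (2 * b) + (a / b) ^ 3 * (besselI1 (x / a) - x / (2 * a)) := by
  have hb : 0 < b := ha.trans_le hab
  have h := besselI1_mul_sub_half_le (div_nonneg ha.le hb.le) ((div_le_one hb).2 hab)
    (div_nonneg hx ha.le)
  rw [show a / b * (x / a) = x / b by field_simp] at h
  calc besselI1 (x / b) ≤ x / b / 2 + (a / b) ^ 3 * (besselI1 (x / a) - x / a / 2) := by linarith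
    _ = _ := by ring

lemma log_le_sub_inv_div_two {u : ℝ} (hu : 1 ≤ u) : log u ≤ (u - u⁻¹) / 2 := by
  rw [← sinh_log (by positivity)]
  exact self_le_sinh_iff.2 (log_nonneg hu)

lemma harmonic_le_log_add_eulerMascheroniConstant_add (n : ℕ) :
    (harmonic n : ℝ) ≤ log n + eulerMascheroniConstant + 1 / (2 * n) := by
  set f : ℕ → ℝ := fun m ↦ harmonic m - log m - 1 / (2 * m)
  have hmono : Monotone f := by
    refine monotone_nat_of_le_succ fun m ↦ ?_
    rcases Nat.eq_zero_or_pos m with rfl | hm_pos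
    · norm_num [f]
    have hm : (1 : ℝ) ≤ m := mod_cast hm_pos
    have hlog : log (m + 1) - log m ≤ ((m : ℝ) + 1)⁻¹ - 1 / (2 * (m + 1)) + 1 / (2 * m) := by
      rw [← log_div (by positivity) (by positivity)]
      refine (log_le_sub_inv_div_two ((one_le_div (by positivity)).2 (by linarith))).trans_eq ?_
      field_simp
      ring
    simp only [f, harmonic_succ]
    push_cast
    linarith
  have hlim : Tendsto f atTop (𝓝 eulerMascheroniConstant) := by
    have h : Tendsto (fun m : ℕ ↦ 1 / (2 * (m : ℝ))) atTop (𝓝 0) := by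
      simpa only [div_div] using tendsto_const_div_atTop_nhds_zero_nat (1 / 2 : ℝ)
    simpa only [sub_zero] using tendsto_harmonic_sub_log.sub h
  have := hmono.ge_of_tendsto hlim n
  simp only [f] at this
  linarith

lemma Finset.sum_Icc_natCast {M : Type*} [AddCommMonoid M] (f : ℤ → M) (a b : ℕ) :
    ∑ k ∈ Icc (a : ℤ) b, f k = ∑ k ∈ Icc a b, f k := by
  refine (sum_nbij' (fun k : ℕ ↦ (k : ℤ)) Int.toNat (fun k hk ↦ ?_) (fun k hk ↦ ?_)
    (fun k _ ↦ Int.toNat_natCast k) (fun k hk ↦ ?_) fun _ _ ↦ rfl).symm <;> simp_all <;> omega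

lemma sum_Icc_three_inv (n : ℕ) (hn : 2 ≤ n) :
    ∑ k ∈ Icc 3 n, (k : ℝ)⁻¹ = harmonic n - 3 / 2 := by
  induction n, hn using Nat.le_induction with
  | base => norm_num [harmonic]
  | succ n hn ih =>
    rw [sum_Icc_succ_top (by omega), ih, harmonic_succ]
    push_cast
    ring

lemma sum_Icc_three_inv_pow_three_le (n : ℕ) (hn : 3 ≤ n) :
    ∑ k ∈ Icc 3 n, ((k : ℝ) ^ 3)⁻¹ ≤ 1 / 9 - 1 / (2 * n ^ 2) := by
  induction n, hn using Nat.le_induction with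
  | base => norm_num
  | succ n hn ih =>
    rw [sum_Icc_succ_top (by omega)]
    have hn : (3 : ℝ) ≤ n := mod_cast hn
    have : ((n + 1 : ℝ) ^ 3)⁻¹ ≤ 1 / (2 * n ^ 2) - 1 / (2 * (n + 1) ^ 2) := by
      rw [div_sub_div _ _ (by positivity) (by positivity), inv_le_iff_one_le_mul₀ (by positivity),
        div_mul_eq_mul_div, le_div_iff₀ (by positivity)]
      nlinarith
    push_cast
    linarith

theorem stmt16 (x : ℝ) (hx : 0 < x) (y : ℤ) (hy : 3 < y) :
    ∑ k ∈ Finset.Icc (3 : ℤ) y, besselI1 (2 * x / (k : ℝ)) ≤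
      x * Real.log (y : ℝ) + 3 * besselI1 (2 * x / 3) -
        (5 / 2 - Real.eulerMascheroniConstant - 1 / (2 * (y : ℝ))) * x := by
  lift y to ℕ using by omega
  replace hy : 3 ≤ y := by omega
  have hD : 0 ≤ besselI1 (2 * x / 3) - x / 3 := by
    linarith [half_le_besselI1 (z := 2 * x / 3) (by positivity)]
  have hterm (k : ℕ) (hk : k ∈ Icc 3 y) : besselI1 (2 * x / k) ≤
      x * (k : ℝ)⁻¹ + 27 * (besselI1 (2 * x / 3) - x / 3) * ((k : ℝ) ^ 3)⁻¹ := by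
    have hk : (3 : ℝ) ≤ k := mod_cast (mem_Icc.1 hk).1
    refine (besselI1_div_le (by positivity) three_pos hk).trans_eq ?_
    field_simp
    ring
  rw [show (3 : ℤ) = ((3 : ℕ) : ℤ) from rfl, sum_Icc_natCast]
  push_cast
  calc ∑ k ∈ Icc 3 y, besselI1 (2 * x / k)
      ≤ ∑ k ∈ Icc 3 y,
          (x * (k : ℝ)⁻¹ + 27 * (besselI1 (2 * x / 3) - x / 3) * ((k : ℝ) ^ 3)⁻¹) :=
        sum_le_sum hterm
    _ = x * (harmonic y - 3 / 2) +
          27 * (besselI1 (2 * x / 3) - x / 3) * ∑ k ∈ Icc 3 y, ((k : ℝ) ^ 3)⁻¹ := by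
        rw [sum_add_distrib, ← mul_sum, ← mul_sum, sum_Icc_three_inv y (by omega)]
    _ ≤ x * (log y + eulerMascheroniConstant + 1 / (2 * y) - 3 / 2) +
          27 * (besselI1 (2 * x / 3) - x / 3) * (1 / 9) := by
        gcongr
        · linarith [harmonic_le_log_add_eulerMascheroniConstant_add y]
        · have : (0 : ℝ) ≤ 1 / (2 * y ^ 2) := by positivity
          linarith [sum_Icc_three_inv_pow_three_le y hy]
    _ = _ := by ring
end

section
/- Let s > 0 be a real number. Then the function M̂(s, t) := (t·log t + 3·I₋₁(2t/3) + s·t) / I₋₁(t) is decreasing in t on [5, ∞); that is, for all real t₁, t₂ with 5 ≤ t₁ ≤ t₂ one has M̂(s, t₂) ≤ M̂(s, t₁). -/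
set_option maxHeartbeats 1000000


open scoped BigOperators

namespace Stmt17Aux

noncomputable def bTerm (z : ℝ) (n : ℕ) : ℝ :=
  (1 / ((Nat.factorial n : ℝ) * (Nat.factorial (n + 1) : ℝ))) * (z / 2) ^ (2 * n + 1)

lemma besselI1_eq (z : ℝ) : besselI1 z = ∑' n, bTerm z n := rfl

lemma bTerm_nonneg {z : ℝ} (hz : 0 ≤ z) (n : ℕ) : 0 ≤ bTerm z n := by
  unfold bTerm; positivity

lemma bTerm_summable {z : ℝ} (hz : 0 ≤ z) : Summable (bTerm z) := by
  refine Summable.of_nonneg_of_le (bTerm_nonneg hz) (fun n => ?_)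
    ((Real.summable_pow_div_factorial ((z / 2) ^ 2)).mul_left (z / 2))
  · unfold bTerm
    have h1 : (z / 2) ^ (2 * n + 1) = ((z / 2) ^ 2) ^ n * (z / 2) := by
      rw [pow_succ, pow_mul]
    have hf1 : (0 : ℝ) < (n.factorial : ℝ) := by exact_mod_cast Nat.factorial_pos n
    have hf2 : (1 : ℝ) ≤ ((n + 1).factorial : ℝ) := by
      exact_mod_cast Nat.one_le_iff_ne_zero.mpr (Nat.factorial_ne_zero _)
    have hfac : (1 : ℝ) / ((n.factorial : ℝ) * ((n + 1).factorial : ℝ))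
        ≤ 1 / (n.factorial : ℝ) := by
      apply one_div_le_one_div_of_le hf1
      nlinarith
    rw [h1]
    calc (1 : ℝ) / ((n.factorial : ℝ) * ((n + 1).factorial : ℝ)) * (((z / 2) ^ 2) ^ n * (z / 2))
        ≤ (1 / (n.factorial : ℝ)) * (((z / 2) ^ 2) ^ n * (z / 2)) := by
          apply mul_le_mul_of_nonneg_right hfac (by positivity)
      _ = (z / 2) * (((z / 2) ^ 2) ^ n / n.factorial) := by
          field_simp

lemma besselI1_pos {t : ℝ} (ht : 0 < t) : 0 < besselI1 t := by
  rw [besselI1_eq]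
  refine Summable.tsum_pos (bTerm_summable ht.le) (bTerm_nonneg ht.le) 0 ?_
  unfold bTerm
  norm_num [Nat.factorial]
  positivity

lemma log_ge_one {x : ℝ} (hx : 5 ≤ x) : 1 ≤ Real.log x := by
  rw [Real.le_log_iff_exp_le (by linarith)]
  linarith [Real.exp_one_lt_d9]

lemma log_le {x y : ℝ} (hx : 0 < x) (hxy : x ≤ y) :
    Real.log y ≤ Real.log x + (y - x) / x := by
  have hy : 0 < y := hx.trans_le hxy
  have h := Real.log_le_sub_one_of_pos (show 0 < y / x by positivity)
  rw [Real.log_div (ne_of_gt hy) (ne_of_gt hx)] at h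
  have h2 : y / x - 1 = (y - x) / x := by field_simp
  linarith

lemma log_le' {x y : ℝ} (hx : 0 < x) (hxy : x ≤ y) :
    x * Real.log y ≤ x * Real.log x + (y - x) := by
  have h := mul_le_mul_of_nonneg_left (log_le hx hxy) hx.le
  have h2 : x * ((y - x) / x) = y - x := by field_simp
  rw [mul_add, h2] at h
  linarith

lemma claim1 {x y : ℝ} (hx : 5 ≤ x) (hxy : x ≤ y) :
    x ^ 2 * Real.log y ≤ y ^ 2 * Real.log x := by
  have hx0 : (0 : ℝ) < x := by linarith
  have hy0 : (0 : ℝ) < y := by linarith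
  have h1 := log_ge_one hx
  have hlb := log_le' hx0 hxy
  have hlb' := mul_le_mul_of_nonneg_left hlb hx0.le
  have hsq : (0 : ℝ) ≤ y ^ 2 - x ^ 2 := by nlinarith [mul_nonneg (sub_nonneg.2 hxy) (show (0:ℝ) ≤ y + x by linarith)]
  have hh : (y ^ 2 - x ^ 2) * 1 ≤ (y ^ 2 - x ^ 2) * Real.log x :=
    mul_le_mul_of_nonneg_left h1 hsq
  nlinarith [mul_nonneg hy0.le (sub_nonneg.2 hxy)]

lemma claim2 {x y : ℝ} (hx : 5 ≤ x) (hxy : x ≤ y) :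
    (8 + x ^ 2) * Real.log y ≤ (8 + y ^ 2) * Real.log x := by
  have hx0 : (0 : ℝ) < x := by linarith
  have hy0 : (0 : ℝ) < y := by linarith
  have h1 := log_ge_one hx
  have hlb := log_le' hx0 hxy
  have key : x * ((8 + x ^ 2) * Real.log y) ≤ x * ((8 + y ^ 2) * Real.log x) := by
    have h2 := mul_le_mul_of_nonneg_left hlb (show (0 : ℝ) ≤ 8 + x ^ 2 by positivity)
    have hsq : (0 : ℝ) ≤ y ^ 2 - x ^ 2 := by
      nlinarith [mul_nonneg (sub_nonneg.2 hxy) (show (0:ℝ) ≤ y + x by linarith)]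
    have h3 : (x * (y ^ 2 - x ^ 2)) * 1 ≤ (x * (y ^ 2 - x ^ 2)) * Real.log x :=
      mul_le_mul_of_nonneg_left h1 (mul_nonneg hx0.le hsq)
    nlinarith [mul_nonneg (sub_nonneg.2 hxy) (show (0 : ℝ) ≤ x * y - 8 by nlinarith)]
  exact le_of_mul_le_mul_left key hx0

lemma piece3_term {x y : ℝ} (hx : 0 ≤ x) (hxy : x ≤ y) (c : ℝ) (hc : 0 ≤ c) (n : ℕ) :
    y * (c * (x / 2) ^ (2 * n + 1)) ≤ x * (c * (y / 2) ^ (2 * n + 1)) := by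
  have hy : 0 ≤ y := hx.trans hxy
  have hpow : (x / 2) ^ (2 * n) ≤ (y / 2) ^ (2 * n) :=
    pow_le_pow_left₀ (by linarith) (by linarith) _
  calc y * (c * (x / 2) ^ (2 * n + 1)) = (c * x * y / 2) * (x / 2) ^ (2 * n) := by
        rw [pow_succ]; ring
    _ ≤ (c * x * y / 2) * (y / 2) ^ (2 * n) := by
        apply mul_le_mul_of_nonneg_left hpow
        have := mul_nonneg (mul_nonneg hc hx) hy
        linarith
    _ = x * (c * (y / 2) ^ (2 * n + 1)) := by rw [pow_succ]; ring

lemma piece3 {x y : ℝ} (hx : 0 < x) (hxy : x ≤ y) :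
    y * besselI1 x ≤ x * besselI1 y := by
  have hy : 0 < y := hx.trans_le hxy
  rw [besselI1_eq, besselI1_eq, ← tsum_mul_left, ← tsum_mul_left]
  refine Summable.tsum_le_tsum (fun n => ?_) ((bTerm_summable hx.le).mul_left _)
    ((bTerm_summable hy.le).mul_left _)
  exact piece3_term hx.le hxy _ (by positivity) n

lemma piece1_term {x y : ℝ} (hx : 5 ≤ x) (hxy : x ≤ y) (c : ℝ) (hc : 0 ≤ c) (n : ℕ) :
    y * Real.log y * (c * (x / 2) ^ (2 * (n + 2) + 1)) ≤
      x * Real.log x * (c * (y / 2) ^ (2 * (n + 2) + 1)) := by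
  have hx0 : (0 : ℝ) < x := by linarith
  have hy0 : (0 : ℝ) < y := by linarith
  have hlx : (0 : ℝ) ≤ Real.log x := by linarith [log_ge_one hx]
  have hc1 := claim1 hx hxy
  have hpow : x ^ (2 * n + 2) ≤ y ^ (2 * n + 2) := pow_le_pow_left₀ hx0.le hxy _
  have key : x ^ (2 * n + 2) * (x ^ 2 * Real.log y) ≤
      y ^ (2 * n + 2) * (y ^ 2 * Real.log x) := by
    calc x ^ (2 * n + 2) * (x ^ 2 * Real.log y)
        ≤ x ^ (2 * n + 2) * (y ^ 2 * Real.log x) :=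
          mul_le_mul_of_nonneg_left hc1 (by positivity)
      _ ≤ y ^ (2 * n + 2) * (y ^ 2 * Real.log x) :=
          mul_le_mul_of_nonneg_right hpow (mul_nonneg (by positivity) hlx)
  have hC : (0 : ℝ) ≤ c / 2 ^ (2 * (n + 2) + 1) := by positivity
  have hxy0 : (0 : ℝ) ≤ x * y := by positivity
  calc y * Real.log y * (c * (x / 2) ^ (2 * (n + 2) + 1))
      = (c / 2 ^ (2 * (n + 2) + 1)) *
          ((x * y) * (x ^ (2 * n + 2) * (x ^ 2 * Real.log y))) := by
        rw [div_pow]; ring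
    _ ≤ (c / 2 ^ (2 * (n + 2) + 1)) *
          ((x * y) * (y ^ (2 * n + 2) * (y ^ 2 * Real.log x))) :=
        mul_le_mul_of_nonneg_left (mul_le_mul_of_nonneg_left key hxy0) hC
    _ = x * Real.log x * (c * (y / 2) ^ (2 * (n + 2) + 1)) := by
        rw [div_pow]; ring

lemma piece1 {x y : ℝ} (hx : 5 ≤ x) (hxy : x ≤ y) :
    y * Real.log y * besselI1 x ≤ x * Real.log x * besselI1 y := by
  have hx0 : (0 : ℝ) < x := by linarith
  have hy0 : (0 : ℝ) < y := by linarith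
  set f : ℕ → ℝ := fun n => y * Real.log y * bTerm x n with hf
  set g : ℕ → ℝ := fun n => x * Real.log x * bTerm y n with hg
  have hsf : Summable f := (bTerm_summable hx0.le).mul_left _
  have hsg : Summable g := (bTerm_summable hy0.le).mul_left _
  have hsf1 : Summable fun n => f (n + 1) := (summable_nat_add_iff 1).mpr hsf
  have hsg1 : Summable fun n => g (n + 1) := (summable_nat_add_iff 1).mpr hsg
  have hsf2 : Summable fun n => f (n + 2) := (summable_nat_add_iff 2).mpr hsf
  have hsg2 : Summable fun n => g (n + 2) := (summable_nat_add_iff 2).mpr hsg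
  have ef : ∑' n, f n = f 0 + (f 1 + ∑' n, f (n + 2)) := by
    rw [Summable.tsum_eq_zero_add hsf, Summable.tsum_eq_zero_add hsf1]
  have eg : ∑' n, g n = g 0 + (g 1 + ∑' n, g (n + 2)) := by
    rw [Summable.tsum_eq_zero_add hsg, Summable.tsum_eq_zero_add hsg1]
  have htail : ∑' n, f (n + 2) ≤ ∑' n, g (n + 2) := by
    refine Summable.tsum_le_tsum (fun n => ?_) hsf2 hsg2
    exact piece1_term hx hxy _ (by positivity) n
  have hhead : f 0 + f 1 ≤ g 0 + g 1 := by
    have hc2 := claim2 hx hxy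
    have h0 : (0 : ℝ) ≤ x * y / 16 := by positivity
    have h2 := mul_le_mul_of_nonneg_left hc2 h0
    simp only [hf, hg, bTerm, Nat.factorial]
    push_cast
    nlinarith [h2]
  have : y * Real.log y * besselI1 x = ∑' n, f n := by
    rw [besselI1_eq, ← tsum_mul_left]
  rw [this]
  have : x * Real.log x * besselI1 y = ∑' n, g n := by
    rw [besselI1_eq, ← tsum_mul_left]
  rw [this, ef, eg]
  linarith

lemma key4 {a x y : ℝ} (ha0 : 0 ≤ a) (ha1 : a ≤ 1) (hx : 0 ≤ x) (hxy : x ≤ y)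
    (α β : ℕ) (hab : α ≤ β) :
    a ^ α * y ^ α * x ^ β + a ^ β * y ^ β * x ^ α ≤
      a ^ α * x ^ α * y ^ β + a ^ β * x ^ β * y ^ α := by
  obtain ⟨k, rfl⟩ := Nat.le.dest hab
  have hy : 0 ≤ y := hx.trans hxy
  have h1 : x ^ k ≤ y ^ k := pow_le_pow_left₀ hx hxy k
  have h2 : a ^ k ≤ 1 := pow_le_one₀ ha0 ha1
  have e : (0 : ℝ) ≤ a ^ α * x ^ α * y ^ α := by positivity
  have main : (0 : ℝ) ≤ (a ^ α * x ^ α * y ^ α) * ((1 - a ^ k) * (y ^ k - x ^ k)) :=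
    mul_nonneg e (mul_nonneg (by linarith) (by linarith))
  simp only [pow_add]
  nlinarith [main]

lemma key4' {a x y : ℝ} (ha0 : 0 ≤ a) (ha1 : a ≤ 1) (hx : 0 ≤ x) (hxy : x ≤ y)
    (α β : ℕ) :
    a ^ α * y ^ α * x ^ β + a ^ β * y ^ β * x ^ α ≤
      a ^ α * x ^ α * y ^ β + a ^ β * x ^ β * y ^ α := by
  rcases le_total α β with h | h
  · exact key4 ha0 ha1 hx hxy α β h
  · have := key4 ha0 ha1 hx hxy β α h
    linarith

lemma piece2_pt {a x y : ℝ} (ha0 : 0 ≤ a) (ha1 : a ≤ 1) (hx : 0 ≤ x) (hxy : x ≤ y)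
    (m n : ℕ) :
    bTerm (a * y) m * bTerm x n + bTerm (a * y) n * bTerm x m ≤
      bTerm (a * x) m * bTerm y n + bTerm (a * x) n * bTerm y m := by
  unfold bTerm
  set cm : ℝ := 1 / ((m.factorial : ℝ) * ((m + 1).factorial : ℝ)) with hcm
  set cn : ℝ := 1 / ((n.factorial : ℝ) * ((n + 1).factorial : ℝ)) with hcn
  have hcm0 : (0 : ℝ) ≤ cm := by positivity
  have hcn0 : (0 : ℝ) ≤ cn := by positivity
  set α : ℕ := 2 * m + 1
  set β : ℕ := 2 * n + 1
  have k4 := key4' ha0 ha1 hx hxy α β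
  have hC : (0 : ℝ) ≤ cm * cn / (2 ^ α * 2 ^ β) := by positivity
  have h := mul_le_mul_of_nonneg_left k4 hC
  calc cm * (a * y / 2) ^ α * (cn * (x / 2) ^ β) + cn * (a * y / 2) ^ β * (cm * (x / 2) ^ α)
      = (cm * cn / (2 ^ α * 2 ^ β)) *
          (a ^ α * y ^ α * x ^ β + a ^ β * y ^ β * x ^ α) := by
        simp only [div_pow, mul_pow]; field_simp
    _ ≤ (cm * cn / (2 ^ α * 2 ^ β)) *
          (a ^ α * x ^ α * y ^ β + a ^ β * x ^ β * y ^ α) := h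
    _ = cm * (a * x / 2) ^ α * (cn * (y / 2) ^ β) + cn * (a * x / 2) ^ β * (cm * (y / 2) ^ α) := by
        simp only [div_pow, mul_pow]; field_simp

lemma piece2 {a x y : ℝ} (ha0 : 0 < a) (ha1 : a ≤ 1) (hx : 0 < x) (hxy : x ≤ y) :
    besselI1 (a * y) * besselI1 x ≤ besselI1 (a * x) * besselI1 y := by
  have hy : 0 < y := hx.trans_le hxy
  have hax : (0 : ℝ) ≤ a * x := by positivity
  have hay : (0 : ℝ) ≤ a * y := by positivity
  have su := bTerm_summable hay
  have sv := bTerm_summable hx.le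
  have sU := bTerm_summable hax
  have sV := bTerm_summable hy.le
  have nu : Summable fun n => ‖bTerm (a * y) n‖ := by
    simpa [Real.norm_eq_abs, abs_of_nonneg (bTerm_nonneg hay _)] using su
  have nv : Summable fun n => ‖bTerm x n‖ := by
    simpa [Real.norm_eq_abs, abs_of_nonneg (bTerm_nonneg hx.le _)] using sv
  have nU : Summable fun n => ‖bTerm (a * x) n‖ := by
    simpa [Real.norm_eq_abs, abs_of_nonneg (bTerm_nonneg hax _)] using sU
  have nV : Summable fun n => ‖bTerm y n‖ := by
    simpa [Real.norm_eq_abs, abs_of_nonneg (bTerm_nonneg hy.le _)] using sV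
  set P : ℕ × ℕ → ℝ := fun p => bTerm (a * y) p.1 * bTerm x p.2 with hP
  set Q : ℕ × ℕ → ℝ := fun p => bTerm (a * x) p.1 * bTerm y p.2 with hQ
  have hPs : Summable P := summable_mul_of_summable_norm nu nv
  have hQs : Summable Q := summable_mul_of_summable_norm nU nV
  have hPsw : Summable fun p : ℕ × ℕ => P p.swap :=
    ((Equiv.prodComm ℕ ℕ).summable_iff).mpr hPs
  have hQsw : Summable fun p : ℕ × ℕ => Q p.swap :=
    ((Equiv.prodComm ℕ ℕ).summable_iff).mpr hQs
  have eP : besselI1 (a * y) * besselI1 x = ∑' p : ℕ × ℕ, P p := by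
    rw [besselI1_eq, besselI1_eq]
    exact tsum_mul_tsum_of_summable_norm nu nv
  have eQ : besselI1 (a * x) * besselI1 y = ∑' p : ℕ × ℕ, Q p := by
    rw [besselI1_eq, besselI1_eq]
    exact tsum_mul_tsum_of_summable_norm nU nV
  have swP : ∑' p : ℕ × ℕ, P p.swap = ∑' p : ℕ × ℕ, P p :=
    (Equiv.prodComm ℕ ℕ).tsum_eq P
  have swQ : ∑' p : ℕ × ℕ, Q p.swap = ∑' p : ℕ × ℕ, Q p :=
    (Equiv.prodComm ℕ ℕ).tsum_eq Q
  have hpt : ∀ p : ℕ × ℕ, P p + P p.swap ≤ Q p + Q p.swap := fun p =>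
    piece2_pt ha0.le ha1 hx.le hxy p.1 p.2
  have hsum_le : ∑' p : ℕ × ℕ, (P p + P p.swap) ≤ ∑' p : ℕ × ℕ, (Q p + Q p.swap) :=
    Summable.tsum_le_tsum hpt (hPs.add hPsw) (hQs.add hQsw)
  rw [Summable.tsum_add hPs hPsw, Summable.tsum_add hQs hQsw, swP, swQ] at hsum_le
  rw [eP, eQ]
  linarith

end Stmt17Aux

open Stmt17Aux in
theorem stmt17 (s : ℝ) (hs : 0 < s) (t₁ t₂ : ℝ) (h1 : 5 ≤ t₁) (h12 : t₁ ≤ t₂) :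
    (t₂ * Real.log t₂ + 3 * besselI1 (2 * t₂ / 3) + s * t₂) / besselI1 t₂ ≤
      (t₁ * Real.log t₁ + 3 * besselI1 (2 * t₁ / 3) + s * t₁) / besselI1 t₁ := by
  have hx0 : (0 : ℝ) < t₁ := by linarith
  have hy0 : (0 : ℝ) < t₂ := by linarith
  have hD1 := besselI1_pos hx0
  have hD2 := besselI1_pos hy0
  rw [div_le_div_iff₀ hD2 hD1]
  have e1 : (2 : ℝ) * t₁ / 3 = (2 / 3) * t₁ := by ring
  have e2 : (2 : ℝ) * t₂ / 3 = (2 / 3) * t₂ := by ring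
  rw [e1, e2]
  have p1 := piece1 h1 h12
  have p2 := piece2 (show (0 : ℝ) < 2 / 3 by norm_num) (by norm_num) hx0 h12
  have p3 := piece3 hx0 h12
  have p3' := mul_le_mul_of_nonneg_left p3 hs.le
  have p2' := mul_le_mul_of_nonneg_left p2 (show (0:ℝ) ≤ 3 by norm_num)
  nlinarith [p1, p2', p3']
end

section
/- The function t ↦ t·log t / I₋₁(t) is decreasing on [5, ∞); that is, for all real t₁, t₂ with 5 ≤ t₁ ≤ t₂ one has t₂·log t₂ / I₋₁(t₂) ≤ t₁·log t₁ / I₋₁(t₁). -/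
open scoped BigOperators

lemma bessel_summable (z : ℝ) :
    Summable (fun n : ℕ =>
      (1 / ((Nat.factorial n : ℝ) * (Nat.factorial (n + 1) : ℝ))) * (z / 2) ^ (2 * n + 1)) := by
  apply Summable.of_norm
  refine Summable.of_nonneg_of_le (fun n => norm_nonneg _) (fun n => ?_)
    (((Real.summable_pow_div_factorial ((|z| / 2) ^ 2)).mul_left (|z| / 2)))
  · 
    have hf1 : (0:ℝ) < (Nat.factorial n : ℝ) := by exact_mod_cast Nat.factorial_pos n
    have hf2 : (1:ℝ) ≤ (Nat.factorial (n + 1) : ℝ) := by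
      exact_mod_cast Nat.one_le_iff_ne_zero.mpr (Nat.factorial_ne_zero _)
    have hz : ‖(z / 2 : ℝ)‖ = |z| / 2 := by
      rw [Real.norm_eq_abs, abs_div]; norm_num
    rw [norm_mul, norm_pow, hz, norm_div, Real.norm_eq_abs, Real.norm_eq_abs]
    have habs : |(1:ℝ)| / |(Nat.factorial n : ℝ) * (Nat.factorial (n + 1) : ℝ)|
        = 1 / ((Nat.factorial n : ℝ) * (Nat.factorial (n + 1) : ℝ)) := by
      rw [abs_one, abs_of_pos (by positivity)]
    rw [habs]
    have hpow : (|z| / 2) ^ (2 * n + 1) = (|z| / 2) * ((|z| / 2) ^ 2) ^ n := by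
      rw [← pow_mul]; ring
    rw [hpow]
    rw [div_mul_eq_mul_div, one_mul]
    rw [mul_div_assoc]
    apply mul_le_mul_of_nonneg_left _ (by positivity)
    apply div_le_div_of_nonneg_left (by positivity) hf1
    nlinarith [hf1, hf2]

lemma bessel_pos (t : ℝ) (ht : 0 < t) : 0 < besselI1 t := by
  have hs := bessel_summable t
  have h0 : (1 / ((Nat.factorial 0 : ℝ) * (Nat.factorial (0 + 1) : ℝ))) * (t / 2) ^ (2 * 0 + 1)
      ≤ besselI1 t := Summable.le_tsum hs 0 (fun j _ => by positivity)
  simp [Nat.factorial] at h0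
  linarith

theorem stmt18 (t₁ t₂ : ℝ) (h1 : 5 ≤ t₁) (h12 : t₁ ≤ t₂) :
    t₂ * Real.log t₂ / besselI1 t₂ ≤ t₁ * Real.log t₁ / besselI1 t₁ := by
  have h2 : (5:ℝ) ≤ t₂ := le_trans h1 h12
  have ht1pos : (0:ℝ) < t₁ := by linarith
  have ht2pos : (0:ℝ) < t₂ := by linarith
  set L₁ := Real.log t₁ with hL₁def
  set L₂ := Real.log t₂ with hL₂def
  have hlog1 : 1 ≤ L₁ := by
    rw [hL₁def, Real.le_log_iff_exp_le ht1pos]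
    have := Real.exp_one_lt_d9
    linarith
  have hlog2 : 1 ≤ L₂ := by
    have := Real.log_le_log ht1pos h12
    linarith
  have hdiv : L₂ - L₁ ≤ t₂ / t₁ - 1 := by
    have h := Real.log_le_sub_one_of_pos (div_pos ht2pos ht1pos)
    rwa [Real.log_div (ne_of_gt ht2pos) (ne_of_gt ht1pos)] at h
  have hL1 : t₁ * L₂ ≤ t₂ * L₁ := by
    have h' : t₁ * (L₂ - L₁) ≤ t₂ - t₁ := by
      have h := mul_le_mul_of_nonneg_left hdiv (le_of_lt ht1pos)
      have he : t₁ * (t₂ / t₁ - 1) = t₂ - t₁ := by field_simp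
      linarith [he ▸ h]
    nlinarith [mul_nonneg (sub_nonneg.2 h12) (sub_nonneg.2 hlog1)]
  have hmix : (8 + t₁ ^ 2) * t₂ ≤ (8 + t₂ ^ 2) * t₁ := by
    nlinarith [mul_nonneg (sub_nonneg.2 h12) (show (0:ℝ) ≤ t₁ * t₂ - 8 by nlinarith)]
  have hKey : (8 + t₁ ^ 2) * L₂ ≤ (8 + t₂ ^ 2) * L₁ := by
    have h5 : t₁ * ((8 + t₁ ^ 2) * L₂) ≤ t₁ * ((8 + t₂ ^ 2) * L₁) := by
      nlinarith [mul_le_mul_of_nonneg_left hL1 (show (0:ℝ) ≤ 8 + t₁ ^ 2 by positivity),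
        mul_le_mul_of_nonneg_right hmix (le_trans zero_le_one hlog1)]
    exact le_of_mul_le_mul_left h5 ht1pos
  -- main inequality after clearing denominators
  rw [div_le_div_iff₀ (bessel_pos t₂ ht2pos) (bessel_pos t₁ ht1pos)]
  set f : ℝ → ℕ → ℝ := fun t n =>
    (1 / ((Nat.factorial n : ℝ) * (Nat.factorial (n + 1) : ℝ))) * (t / 2) ^ (2 * n + 1) with hfdef
  have hs1 : Summable (f t₁) := bessel_summable t₁
  have hs2 : Summable (f t₂) := bessel_summable t₂
  set g : ℕ → ℝ := fun n => f t₂ n * (t₁ * L₁) - f t₁ n * (t₂ * L₂) with hgdef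
  have hg : Summable g := (hs2.mul_right _).sub (hs1.mul_right _)
  have hsum : ∑' n, g n = besselI1 t₂ * (t₁ * L₁) - besselI1 t₁ * (t₂ * L₂) := by
    rw [hgdef]
    rw [Summable.tsum_sub (hs2.mul_right _) (hs1.mul_right _), tsum_mul_right, tsum_mul_right]
    rfl
  have hcore : ∀ n : ℕ, t₁ ^ (2 * n + 5) * (t₂ * L₂) ≤ t₂ ^ (2 * n + 5) * (t₁ * L₁) := by
    intro n
    have hL2nn : (0:ℝ) ≤ L₂ := by linarith
    have hL1nn : (0:ℝ) ≤ L₁ := by linarith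
    calc t₁ ^ (2 * n + 5) * (t₂ * L₂) = (t₁ ^ (2 * n + 4) * t₂) * (t₁ * L₂) := by ring
      _ ≤ (t₁ ^ (2 * n + 4) * t₂) * (t₂ * L₁) := by
          apply mul_le_mul_of_nonneg_left hL1 (by positivity)
      _ = t₁ * (t₁ ^ (2 * n + 3) * (t₂ ^ 2 * L₁)) := by ring
      _ ≤ t₁ * (t₂ ^ (2 * n + 3) * (t₂ ^ 2 * L₁)) := by
          apply mul_le_mul_of_nonneg_left _ (le_of_lt ht1pos)
          exact mul_le_mul_of_nonneg_right (pow_le_pow_left₀ ht1pos.le h12 _) (by positivity)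
      _ = t₂ ^ (2 * n + 5) * (t₁ * L₁) := by ring
  have htail : ∀ n : ℕ, 0 ≤ g (n + 2) := by
    intro n
    rw [hgdef]
    simp only [hfdef]
    rw [sub_nonneg]
    have hexp : 2 * (n + 2) + 1 = 2 * n + 5 := by ring
    rw [hexp, mul_assoc, mul_assoc]
    apply mul_le_mul_of_nonneg_left _ (by positivity)
    have e1 : (t₁ / 2) ^ (2 * n + 5) = t₁ ^ (2 * n + 5) / 2 ^ (2 * n + 5) := div_pow _ _ _
    have e2 : (t₂ / 2) ^ (2 * n + 5) = t₂ ^ (2 * n + 5) / 2 ^ (2 * n + 5) := div_pow _ _ _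
    rw [e1, e2, div_mul_eq_mul_div, div_mul_eq_mul_div]
    exact div_le_div_of_nonneg_right (hcore n) (by positivity)
  have hhead : 0 ≤ ∑ i ∈ Finset.range 2, g i := by
    rw [hgdef]
    simp only [hfdef, Finset.sum_range_succ, Finset.sum_range_zero]
    norm_num [Nat.factorial]
    nlinarith [mul_nonneg (mul_nonneg ht1pos.le ht2pos.le) (sub_nonneg.2 hKey)]
  have hsplit := Summable.sum_add_tsum_nat_add 2 hg
  have htailsum : 0 ≤ ∑' n, g (n + 2) := tsum_nonneg htail
  have : 0 ≤ ∑' n, g n := by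
    rw [← hsplit]
    exact add_nonneg hhead htailsum
  rw [hsum] at this
  nlinarith [this]
end

section
/- The function x ↦ I₋₁(2x) / I₋₁(3x) is strictly decreasing on (0, ∞); that is, for all real x, y with 0 < x < y one has I₋₁(2y) / I₋₁(3y) < I₋₁(2x) / I₋₁(3x). -/
open scoped BigOperators

namespace Stmt19Aux

noncomputable def a (n : ℕ) : ℝ := 1 / ((Nat.factorial n : ℝ) * (Nat.factorial (n + 1) : ℝ))

lemma a_pos (n : ℕ) : 0 < a n := by
  unfold a
  positivity

lemma a_le (n : ℕ) : a n ≤ 1 / (Nat.factorial n : ℝ) := by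
  unfold a
  have h1 : (0:ℝ) < (Nat.factorial n : ℝ) := by positivity
  have h2 : (1:ℝ) ≤ (Nat.factorial (n+1) : ℝ) := by
    exact_mod_cast Nat.one_le_iff_ne_zero.mpr (Nat.factorial_ne_zero _)
  rw [div_le_div_iff₀ (by positivity) h1]
  nlinarith

lemma summable_term (s : ℝ) (hs : 0 ≤ s) : Summable (fun n => a n * s ^ (2*n+1)) := by
  have h := (Real.summable_pow_div_factorial (s^2)).mul_left s
  refine Summable.of_nonneg_of_le (fun n => mul_nonneg (a_pos n).le (by positivity)) (fun n => ?_) h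
  have he : s ^ (2*n+1) = s * (s^2)^n := by ring
  rw [he]
  have h1 : a n * (s * (s^2)^n) ≤ (1 / (Nat.factorial n : ℝ)) * (s * (s^2)^n) := by
    apply mul_le_mul_of_nonneg_right (a_le n) (by positivity)
  calc a n * (s * (s^2)^n) ≤ (1 / (Nat.factorial n : ℝ)) * (s * (s^2)^n) := h1
    _ = s * ((s^2)^n / (Nat.factorial n : ℝ)) := by ring

lemma besselI1_eq (t : ℝ) : besselI1 t = ∑' n : ℕ, a n * (t/2) ^ (2*n+1) := rfl

lemma besselI1_pos (t : ℝ) (ht : 0 < t) : 0 < besselI1 t := by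
  rw [besselI1_eq]
  have hs := summable_term (t/2) (by positivity)
  refine Summable.tsum_pos hs (fun n => mul_nonneg (a_pos n).le (by positivity)) 0 ?_
  exact mul_pos (a_pos 0) (by positivity)

lemma tsum_mul_eq (u v : ℕ → ℝ) (hu : Summable u) (hv : Summable v) (hu0 : ∀ n, 0 ≤ u n)
    (hv0 : ∀ n, 0 ≤ v n) : (∑' n, u n) * (∑' n, v n) = ∑' p : ℕ × ℕ, u p.1 * v p.2 := by
  have hsum : Summable (fun p : ℕ × ℕ => u p.1 * v p.2) :=
    hu.mul_of_nonneg hv hu0 hv0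
  have h1 := Summable.tsum_prod' hsum (fun b => hv.mul_left (u b))
  rw [h1]
  simp only [tsum_mul_left]
  rw [tsum_mul_right]

end Stmt19Aux

open Stmt19Aux in
theorem stmt19 (x y : ℝ) (hx : 0 < x) (hxy : x < y) :
    besselI1 (2 * y) / besselI1 (3 * y) < besselI1 (2 * x) / besselI1 (3 * x) := by
  have hy : 0 < y := hx.trans hxy
  -- f t n : term for besselI1 (2 t), g t n : term for besselI1 (3 t)
  set r : ℝ := 3/2 with hr
  have hr1 : (1:ℝ) ≤ r := by norm_num [hr]
  set f : ℝ → ℕ → ℝ := fun t n => a n * t ^ (2*n+1) with hf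
  set g : ℝ → ℕ → ℝ := fun t n => (a n * r ^ (2*n+1)) * t ^ (2*n+1) with hg
  have hbf : ∀ t : ℝ, besselI1 (2 * t) = ∑' n, f t n := by
    intro t
    rw [besselI1_eq]
    congr 1; funext n
    have : 2 * t / 2 = t := by ring
    rw [this]
  have hbg : ∀ t : ℝ, besselI1 (3 * t) = ∑' n, g t n := by
    intro t
    rw [besselI1_eq]
    congr 1; funext n
    have h1 : 3 * t / 2 = r * t := by rw [hr]; ring
    rw [h1, mul_pow]
    ring
  have hfpos : ∀ n t, 0 < t → 0 < f t n := fun n t ht => by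
    have := a_pos n; simp only [hf]; positivity
  have hgpos : ∀ n t, 0 < t → 0 < g t n := fun n t ht => by
    have := a_pos n; simp only [hg, hr]; positivity
  have hsf : ∀ t : ℝ, 0 ≤ t → Summable (f t) := fun t ht => summable_term t ht
  have hsg : ∀ t : ℝ, 0 ≤ t → Summable (g t) := by
    intro t ht
    have h := summable_term (r * t) (by positivity)
    refine h.congr fun n => ?_
    simp only [hg, mul_pow]; ring
  have hgx : 0 < ∑' n, g x n :=
    Summable.tsum_pos (hsg x hx.le) (fun n => (hgpos n x hx).le) 0 (hgpos 0 x hx)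
  have hgy : 0 < ∑' n, g y n :=
    Summable.tsum_pos (hsg y hy.le) (fun n => (hgpos n y hy).le) 0 (hgpos 0 y hy)
  rw [hbf, hbf, hbg, hbg, div_lt_div_iff₀ hgy hgx]
  set A : ℕ × ℕ → ℝ := fun p => f y p.1 * g x p.2 with hA
  set B : ℕ × ℕ → ℝ := fun p => f x p.1 * g y p.2 with hB
  have hAs : Summable A := (hsf y hy.le).mul_of_nonneg (hsg x hx.le)
    (fun n => (hfpos n y hy).le) (fun n => (hgpos n x hx).le)
  have hBs : Summable B := (hsf x hx.le).mul_of_nonneg (hsg y hy.le)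
    (fun n => (hfpos n x hx).le) (fun n => (hgpos n y hy).le)
  rw [tsum_mul_eq _ _ (hsf y hy.le) (hsg x hx.le) (fun n => (hfpos n y hy).le)
      (fun n => (hgpos n x hx).le),
    tsum_mul_eq _ _ (hsf x hx.le) (hsg y hy.le) (fun n => (hfpos n x hx).le)
      (fun n => (hgpos n y hy).le)]
  -- goal: ∑' A < ∑' B, i.e. 0 < ∑' (B - A)
  rw [← sub_pos, ← Summable.tsum_sub hBs hAs]
  set D : ℕ × ℕ → ℝ := fun p => B p - A p with hD
  have hDs : Summable D := hBs.sub hAs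
  have hswap : Summable (fun p : ℕ × ℕ => D (p.2, p.1)) := by
    have := (Equiv.prodComm ℕ ℕ).summable_iff.mpr hDs
    exact this.congr fun p => rfl
  have hswap_eq : ∑' p : ℕ × ℕ, D (p.2, p.1) = ∑' p, D p := by
    have := (Equiv.prodComm ℕ ℕ).tsum_eq D
    exact this
  set S : ℕ × ℕ → ℝ := fun p => D p + D (p.2, p.1) with hS
  have hSs : Summable S := hDs.add hswap
  have hSfact : ∀ p : ℕ × ℕ,
      S p = (a p.1 * a p.2) * ((r ^ (2*p.2+1) - r ^ (2*p.1+1)) *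
        (x ^ (2*p.1+1) * y ^ (2*p.2+1) - y ^ (2*p.1+1) * x ^ (2*p.2+1))) := by
    rintro ⟨m, n⟩
    simp only [hS, hD, hA, hB, hf, hg]
    ring
  have key : ∀ (m n : ℕ), m ≤ n →
      0 ≤ (r ^ (2*n+1) - r ^ (2*m+1)) *
        (x ^ (2*m+1) * y ^ (2*n+1) - y ^ (2*m+1) * x ^ (2*n+1)) := by
    intro m n hmn
    obtain ⟨k, rfl⟩ := Nat.exists_eq_add_of_le hmn
    have he1 : 2*(m+k)+1 = (2*m+1) + 2*k := by ring
    have er : r ^ (2*(m+k)+1) = r ^ (2*m+1) * r ^ (2*k) := by rw [he1, pow_add]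
    have ex : x ^ (2*(m+k)+1) = x ^ (2*m+1) * x ^ (2*k) := by rw [he1, pow_add]
    have ey : y ^ (2*(m+k)+1) = y ^ (2*m+1) * y ^ (2*k) := by rw [he1, pow_add]
    rw [er, ex, ey]
    have hrp : 0 < r := by norm_num [hr]
    have h1 : (1:ℝ) ≤ r ^ (2*k) := one_le_pow₀ hr1
    have h2 : x ^ (2*k) ≤ y ^ (2*k) := pow_le_pow_left₀ hx.le hxy.le _
    have hx1 : 0 ≤ x ^ (2*m+1) := by positivity
    have hy1 : 0 ≤ y ^ (2*m+1) := by positivity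
    have hr2 : 0 ≤ r ^ (2*m+1) * r ^ (2*k) - r ^ (2*m+1) := by nlinarith [pow_pos hrp (2*m+1)]
    have hxy2 : 0 ≤ x ^ (2*m+1) * (y ^ (2*m+1) * y ^ (2*k)) -
        y ^ (2*m+1) * (x ^ (2*m+1) * x ^ (2*k)) := by
      have h3 : x ^ (2*m+1) * (y ^ (2*m+1) * y ^ (2*k)) -
          y ^ (2*m+1) * (x ^ (2*m+1) * x ^ (2*k))
          = x ^ (2*m+1) * y ^ (2*m+1) * (y ^ (2*k) - x ^ (2*k)) := by ring
      rw [h3]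
      exact mul_nonneg (mul_nonneg hx1 hy1) (sub_nonneg.mpr h2)
    nlinarith [mul_nonneg hr2 hxy2]
  have hSnonneg : ∀ p : ℕ × ℕ, 0 ≤ S p := by
    rintro ⟨m, n⟩
    rw [hSfact (m, n)]
    have ha := (a_pos m).le
    have hb := (a_pos n).le
    rcases le_total m n with h | h
    · exact mul_nonneg (mul_nonneg ha hb) (key m n h)
    · have := key n m h
      refine mul_nonneg (mul_nonneg ha hb) ?_
      nlinarith [this]
  have hSpos : 0 < S (0, 1) := by
    rw [hSfact (0, 1)]
    have ha0 := a_pos 0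
    have ha1 := a_pos 1
    have h1 : (0:ℝ) < r ^ (2*1+1) - r ^ (2*0+1) := by norm_num [hr]
    have h2 : (0:ℝ) < x ^ (2*0+1) * y ^ (2*1+1) - y ^ (2*0+1) * x ^ (2*1+1) := by
      have : x ^ (2*0+1) * y ^ (2*1+1) - y ^ (2*0+1) * x ^ (2*1+1)
          = x * y * (y^2 - x^2) := by ring
      rw [this]
      have h4 : 0 < y^2 - x^2 := by nlinarith
      exact mul_pos (mul_pos hx hy) h4
    positivity
  have hSsum : 0 < ∑' p, S p := Summable.tsum_pos hSs hSnonneg (0, 1) hSpos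
  have : ∑' p, S p = 2 * ∑' p, D p := by
    rw [hS]
    rw [Summable.tsum_add hDs hswap, hswap_eq]
    ring
  linarith [this ▸ hSsum]
end
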